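/- Let Ω be a real m×n matrix with ΩᵀΩ ⪰ κ²I for some κ > 0, ρ > 0, θ₁ : ℝⁿ → ℝ differentiable with L-Lipschitz gradient, θ₂ : ℝᵐ → ℝ, and define the augmented Lagrangian L(x,w;η) = θ₁(x) + θ₂(w) + ⟨η, w − Ωx⟩ + (ρ/2)‖w − Ωx‖². Fix w ∈ ℝᵐ and η ∈ ℝᵐ, and suppose x⁺ ∈ ℝⁿ is a stationary point of x ↦ L(x, w; η), i.e. ∇θ₁(x⁺) − Ωᵀη − ρΩᵀ(w − Ωx⁺) = 0. Then for every x ∈ ℝⁿ, L(x, w; η) − L(x⁺, w; η) ≥ ((ρκ² − L)/2)·‖x⁺ − x‖². -/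

import Mathlib

open scoped RealInnerProductSpace

/-- Multiplication of a vector in Euclidean space by a matrix. -/
noncomputable def mv {m n : ℕ} (M : Matrix (Fin m) (Fin n) ℝ)
    (v : EuclideanSpace ℝ (Fin n)) : EuclideanSpace ℝ (Fin m) :=
  Matrix.toEuclideanLin M v

lemma mv_adjoint {m n : ℕ} (M : Matrix (Fin m) (Fin n) ℝ)
    (y : EuclideanSpace ℝ (Fin m)) (v : EuclideanSpace ℝ (Fin n)) :
    ⟪mv M.transpose y, v⟫ = ⟪y, mv M v⟫ := by
  rw [mv, mv, ← Matrix.conjTranspose_eq_transpose_of_trivial,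
    Matrix.toEuclideanLin_conjTranspose_eq_adjoint]
  exact LinearMap.adjoint_inner_left _ _ _

lemma mv_mul {m n : ℕ} (M : Matrix (Fin m) (Fin n) ℝ)
    (v : EuclideanSpace ℝ (Fin n)) :
    mv (M.transpose * M) v = mv M.transpose (mv M v) := by
  simp [mv, Matrix.toEuclideanLin_apply, ← Matrix.mulVec_mulVec]

lemma descent_lemma {n : ℕ} (θ : EuclideanSpace ℝ (Fin n) → ℝ) (L : ℝ)
    (hθ : Differentiable ℝ θ)
    (hLip : ∀ u v, ‖gradient θ u - gradient θ v‖ ≤ L * ‖u - v‖)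
    (a b : EuclideanSpace ℝ (Fin n)) :
    θ a + ⟪gradient θ a, b - a⟫ - L / 2 * ‖b - a‖ ^ 2 ≤ θ b := by
  set d := b - a with hd
  have lip : LipschitzWith L.toNNReal (gradient θ) := by
    apply LipschitzWith.of_dist_le_mul
    intro u v
    simp only [dist_eq_norm]
    exact le_trans (hLip u v)
      (mul_le_mul_of_nonneg_right (Real.le_coe_toNNReal L) (norm_nonneg _))
  have hg : ∀ t : ℝ, HasDerivAt (fun t : ℝ => θ (a + t • d))
      ⟪gradient θ (a + t • d), d⟫ t := by
    intro t
    have h1 : HasDerivAt (fun t : ℝ => a + t • d) d t := by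
      simpa using ((hasDerivAt_id t).smul_const d).const_add a
    have h2 := (hθ (a + t • d)).hasGradientAt.hasFDerivAt
    have := h2.comp_hasDerivAt t h1
    simpa [InnerProductSpace.toDual_apply_apply, Function.comp_def] using this
  have hcont : Continuous fun t : ℝ => ⟪gradient θ (a + t • d), d⟫ := by
    apply Continuous.inner
    · exact lip.continuous.comp (by continuity)
    · exact continuous_const
  have hint : θ b - θ a = ∫ t in (0:ℝ)..1, ⟪gradient θ (a + t • d), d⟫ := by
    have := intervalIntegral.integral_eq_sub_of_hasDerivAt
      (f := fun t : ℝ => θ (a + t • d))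
      (f' := fun t : ℝ => ⟪gradient θ (a + t • d), d⟫)
      (fun t _ => hg t) (hcont.intervalIntegrable 0 1)
    rw [this]
    simp [hd]
  have hmono : (∫ t in (0:ℝ)..1, (⟪gradient θ a, d⟫ - L * ‖d‖ ^ 2 * t))
      ≤ ∫ t in (0:ℝ)..1, ⟪gradient θ (a + t • d), d⟫ := by
    apply intervalIntegral.integral_mono_on (by norm_num)
    · exact ((continuous_const.sub ((continuous_const.mul continuous_id)) : Continuous fun t : ℝ => ⟪gradient θ a, d⟫ - L * ‖d‖ ^ 2 * t).intervalIntegrable 0 1)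
    · exact hcont.intervalIntegrable 0 1
    · intro t ht
      have h1 : ⟪gradient θ a - gradient θ (a + t • d), d⟫
          ≤ ‖gradient θ a - gradient θ (a + t • d)‖ * ‖d‖ := real_inner_le_norm _ _
      have h2 : ‖gradient θ a - gradient θ (a + t • d)‖ ≤ L * ‖t • d‖ := by
        simpa using hLip a (a + t • d)
      have h3 : ‖t • d‖ = t * ‖d‖ := by
        rw [norm_smul, Real.norm_eq_abs, abs_of_nonneg ht.1]
      have h4 : ⟪gradient θ a - gradient θ (a + t • d), d⟫
          = ⟪gradient θ a, d⟫ - ⟪gradient θ (a + t • d), d⟫ := inner_sub_left _ _ _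
      have hdn : (0:ℝ) ≤ ‖d‖ := norm_nonneg _
      have h5 := mul_le_mul_of_nonneg_right h2 hdn
      rw [h3] at h5
      nlinarith [h1, h4, h5]
  have hval : (∫ t in (0:ℝ)..1, (⟪gradient θ a, d⟫ - L * ‖d‖ ^ 2 * t))
      = ⟪gradient θ a, d⟫ - L / 2 * ‖d‖ ^ 2 := by
    rw [intervalIntegral.integral_sub (g := fun t : ℝ => L * ‖d‖ ^ 2 * t) intervalIntegrable_const
      (((continuous_const.mul continuous_id) :
        Continuous fun t : ℝ => L * ‖d‖ ^ 2 * t).intervalIntegrable 0 1)]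
    rw [intervalIntegral.integral_const_mul, integral_id]
    norm_num
    ring
  rw [hval] at hmono
  rw [← hint] at hmono
  linarith

/-- **Sufficient decrease of the ADMM `x`-update (inequality (lang_1) in the proof of
Lemma 1, Case (b)).** If `θ₁` has `L`-Lipschitz gradient, `ΩᵀΩ ⪰ κ²I`, and `x⁺` is a
stationary point of `x ↦ L(x, w; η)`, i.e.
`∇θ₁(x⁺) − Ωᵀη − ρΩᵀ(w − Ωx⁺) = 0`, then for every `x`,
`L(x, w; η) − L(x⁺, w; η) ≥ ((ρκ² − L)/2)‖x⁺ − x‖²`. -/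
theorem admm_x_update_sufficient_decrease (n m : ℕ)
    (Ω : Matrix (Fin m) (Fin n) ℝ) (ρ L κ : ℝ)
    (hρ : 0 < ρ) (hκ : 0 < κ)
    (θ₁ : EuclideanSpace ℝ (Fin n) → ℝ) (θ₂ : EuclideanSpace ℝ (Fin m) → ℝ)
    (hθ₁ : Differentiable ℝ θ₁)
    (hLip : ∀ u v, ‖gradient θ₁ u - gradient θ₁ v‖ ≤ L * ‖u - v‖)
    (Lag : EuclideanSpace ℝ (Fin n) → EuclideanSpace ℝ (Fin m) →
      EuclideanSpace ℝ (Fin m) → ℝ)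
    (hLag : ∀ x w η, Lag x w η =
      θ₁ x + θ₂ w + ⟪η, w - mv Ω x⟫ + ρ / 2 * ‖w - mv Ω x‖ ^ 2)
    (hΩ : ∀ v : EuclideanSpace ℝ (Fin n),
      κ ^ 2 * ‖v‖ ^ 2 ≤ ⟪mv (Ω.transpose * Ω) v, v⟫)
    (w η : EuclideanSpace ℝ (Fin m)) (xp : EuclideanSpace ℝ (Fin n))
    (hxp : gradient θ₁ xp - mv Ω.transpose η - ρ • mv Ω.transpose (w - mv Ω xp) = 0) :
    ∀ x, (ρ * κ ^ 2 - L) / 2 * ‖xp - x‖ ^ 2 ≤ Lag x w η - Lag xp w η := by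
  intro x
  set d := x - xp with hdd
  set a : EuclideanSpace ℝ (Fin m) := w - mv Ω xp with ha
  set u : EuclideanSpace ℝ (Fin m) := mv Ω d with hu
  have hgrad : gradient θ₁ xp = mv Ω.transpose η + ρ • mv Ω.transpose a := by
    have := sub_eq_zero.mp (by rwa [sub_sub] at hxp)
    rw [this]
  have hdesc := descent_lemma θ₁ L hθ₁ hLip xp x
  have hinner : ⟪gradient θ₁ xp, d⟫ = ⟪η, u⟫ + ρ * ⟪a, u⟫ := by
    rw [hgrad, inner_add_left, real_inner_smul_left, mv_adjoint, mv_adjoint]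
  have hwx : w - mv Ω x = a - u := by
    simp only [ha, hu, hdd, mv]
    rw [map_sub]
    abel
  have hnorm : ‖a - u‖ ^ 2 = ‖a‖ ^ 2 - 2 * ⟪a, u⟫ + ‖u‖ ^ 2 := by
    rw [← real_inner_self_eq_norm_sq, ← real_inner_self_eq_norm_sq,
      ← real_inner_self_eq_norm_sq, inner_sub_sub_self]
    ring_nf
    rw [real_inner_comm u a]
    ring
  have hη : ⟪η, a - u⟫ = ⟪η, a⟫ - ⟪η, u⟫ := inner_sub_right _ _ _
  have hu2 : κ ^ 2 * ‖d‖ ^ 2 ≤ ‖u‖ ^ 2 := by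
    have h1 : ‖u‖ ^ 2 = ⟪mv (Ω.transpose * Ω) d, d⟫ := by
      rw [mv_mul, mv_adjoint, real_inner_self_eq_norm_sq]
    rw [h1]
    exact hΩ d
  have hnxp : ‖xp - x‖ = ‖d‖ := by rw [hdd, norm_sub_rev]
  rw [hLag x w η, hLag xp w η, hwx, hnxp, hnorm, hη]
  rw [hinner] at hdesc
  nlinarith [sq_nonneg ‖d‖, mul_le_mul_of_nonneg_left hu2 (le_of_lt hρ)]
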